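/- Let d ≥ 2 be an integer and let A = E_{s∼p_Sh}[s s^⊤] ∈ ℝ^{d×d} be the second-moment matrix of the Shapley kernel distribution. Then the minimum eigenvalue of the symmetric matrix A equals 1/(2·H_{d−1}); equivalently, φ^⊤ A φ ≥ ‖φ‖₂²/(2·H_{d−1}) for all φ ∈ ℝ^d, and equality holds for some nonzero φ ∈ ℝ^d. -/

import Mathlib

open scoped BigOperators

/-- The `n`-th harmonic number `H_n = ∑_{k=1}^n 1/k`. -/
noncomputable def harm (n : ℕ) : ℝ := ∑ k ∈ Finset.Icc 1 n, (1 : ℝ) / k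

/-- Normalizing constant `Q = ∑_{k=1}^{d-1} (d-1)/(k(d-k))` of the Shapley kernel. -/
noncomputable def shapQ (d : ℕ) : ℝ :=
  ∑ k ∈ Finset.Icc 1 (d - 1), ((d : ℝ) - 1) / ((k : ℝ) * ((d : ℝ) - (k : ℝ)))

/-- Shapley kernel distribution on subsets `s ⊆ {1,…,d}`. -/
noncomputable def pSh (d : ℕ) (s : Finset (Fin d)) : ℝ :=
  if 0 < s.card ∧ s.card < d then
    (((d : ℝ) - 1) /
      ((Nat.choose d s.card : ℝ) * (s.card : ℝ) * ((d : ℝ) - (s.card : ℝ)))) / shapQ d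
  else 0

/-- Second-moment matrix `A = E_{s∼p_Sh}[s sᵀ]`, i.e. `A_{ij} = ∑_s p_Sh(s) s_i s_j`. -/
noncomputable def secondMoment (d : ℕ) : Matrix (Fin d) (Fin d) ℝ :=
  fun i j => ∑ s : Finset (Fin d),
    pSh d s * (if i ∈ s then (1 : ℝ) else 0) * (if j ∈ s then (1 : ℝ) else 0)

/-!
Both the diagonal and the off-diagonal entries of `A` are sums over the subset size `k`, and the
partial fractions `(d-1)/(k(d-k)) = ((d-1)/d)(1/k + 1/(d-k))` turn them, as well as the normaliser
`Q = 2(d-1)H_{d-1}/d`, into harmonic numbers: `A_ii = 1/2` and `A_ij = (H_{d-1} - 1)/(2H_{d-1})`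
for `i ≠ j`. Hence `A = I/(2H_{d-1}) + b·11ᵀ` with `b ≥ 0`, so
`φᵀAφ = ‖φ‖²/(2H_{d-1}) + b(1ᵀφ)²`, with equality exactly on `1^⊥`.
-/

open Finset

lemma sum_Icc_one_eq_sum_range {M : Type*} [AddCommMonoid M] (f : ℕ → M) (n : ℕ) :
    ∑ k ∈ Icc 1 n, f k = ∑ k ∈ range n, f (k + 1) := by
  rw [← Finset.Ico_add_one_right_eq_Icc, sum_Ico_eq_sum_range, Nat.add_sub_cancel]
  simp only [add_comm]

lemma harm_eq_sum_range (n : ℕ) : harm n = ∑ k ∈ range n, 1 / ((k : ℝ) + 1) := by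
  simp [harm, sum_Icc_one_eq_sum_range]

lemma harm_succ (n : ℕ) : harm (n + 1) = harm n + 1 / ((n : ℝ) + 1) := by
  simp only [harm_eq_sum_range, sum_range_succ]

lemma one_le_harm {n : ℕ} (hn : n ≠ 0) : 1 ≤ harm n := by
  obtain ⟨m, rfl⟩ := Nat.exists_eq_succ_of_ne_zero hn
  rw [harm_eq_sum_range, sum_range_succ']
  simpa using sum_nonneg fun k (_ : k ∈ range m) => by positivity

lemma harm_pos {n : ℕ} (hn : n ≠ 0) : 0 < harm n := one_pos.trans_le (one_le_harm hn)

lemma sum_range_one_div_sub (n : ℕ) : ∑ k ∈ range n, 1 / ((n : ℝ) - k) = harm n := by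
  rw [harm_eq_sum_range, ← sum_range_reflect (fun k => 1 / ((k : ℝ) + 1))]
  refine sum_congr rfl fun k hk => ?_
  have := mem_range.1 hk
  rw [Nat.sub_sub, Nat.cast_sub (by omega)]
  push_cast
  ring_nf

lemma shapQ_eq (n : ℕ) : shapQ (n + 2) = 2 * (n + 1) / (n + 2) * harm (n + 1) := by
  calc shapQ (n + 2)
      = ∑ k ∈ range (n + 1), (n + 1) / (n + 2) * (1 / ((k : ℝ) + 1) + 1 / ((n + 1 : ℕ) - k)) := by
        rw [shapQ, sum_Icc_one_eq_sum_range]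
        refine sum_congr rfl fun k hk => ?_
        have : (n : ℝ) + 1 - k ≠ 0 := sub_ne_zero.2 (by exact_mod_cast (mem_range.1 hk).ne')
        push_cast
        rw [show (n : ℝ) + 2 - (k + 1) = n + 1 - k by ring]
        field_simp
        ring
    _ = 2 * (n + 1) / (n + 2) * harm (n + 1) := by
        rw [← mul_sum, sum_add_distrib, ← harm_eq_sum_range, sum_range_one_div_sub]
        ring

section SubsetSums

variable {α M : Type*} [DecidableEq α] [AddCommMonoid M]

lemma sum_powerset_filter_mem {t : Finset α} {a : α} (ha : a ∈ t) (g : Finset α → M) :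
    ∑ s ∈ t.powerset with a ∈ s, g s = ∑ s ∈ (t.erase a).powerset, g (insert a s) := by
  conv_lhs => rw [← insert_erase ha]
  rw [sum_filter, sum_powerset_insert (notMem_erase a t),
    sum_eq_zero fun s hs => if_neg fun has => notMem_erase a t (mem_powerset.1 hs has), zero_add]
  simp

lemma sum_powerset_filter_mem_apply_card {t : Finset α} {a : α} (ha : a ∈ t) (f : ℕ → M) :
    ∑ s ∈ t.powerset with a ∈ s, f #s = ∑ s ∈ (t.erase a).powerset, f (#s + 1) := by
  rw [sum_powerset_filter_mem ha]
  refine sum_congr rfl fun s hs => ?_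
  rw [card_insert_of_notMem fun has => notMem_erase a t (mem_powerset.1 hs has)]

variable [Fintype α]

lemma sum_filter_mem_apply_card {n : ℕ} (hα : Fintype.card α = n + 1) (a : α) (f : ℕ → M) :
    ∑ s : Finset α with a ∈ s, f #s = ∑ k ∈ range (n + 1), n.choose k • f (k + 1) := by
  rw [← powerset_univ, sum_powerset_filter_mem_apply_card (mem_univ a),
    sum_powerset_apply_card (fun k => f (k + 1)), card_erase_of_mem (mem_univ a), card_univ, hα,
    Nat.add_sub_cancel]

lemma sum_filter_mem_and_mem_apply_card {n : ℕ} (hα : Fintype.card α = n + 2) {a b : α}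
    (hab : a ≠ b) (f : ℕ → M) :
    ∑ s : Finset α with a ∈ s ∧ b ∈ s, f #s = ∑ k ∈ range (n + 1), n.choose k • f (k + 2) := by
  have hb : b ∈ univ.erase a := mem_erase.2 ⟨hab.symm, mem_univ b⟩
  calc ∑ s : Finset α with a ∈ s ∧ b ∈ s, f #s
      = ∑ s ∈ univ.powerset with a ∈ s, if b ∈ s then f #s else 0 := by
        rw [powerset_univ, sum_filter, sum_filter]
        simp only [ite_and]
    _ = ∑ s ∈ (univ.erase a).powerset with b ∈ s, f (#s + 1) := by
        rw [sum_powerset_filter_mem (mem_univ a), sum_filter]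
        refine sum_congr rfl fun s hs => ?_
        rw [card_insert_of_notMem fun has => notMem_erase a _ (mem_powerset.1 hs has)]
        simp [hab.symm]
    _ = ∑ k ∈ range (n + 1), n.choose k • f (k + 2) := by
        rw [sum_powerset_filter_mem_apply_card hb (fun k => f (k + 1)),
          sum_powerset_apply_card (fun k => f (k + 1 + 1)), card_erase_of_mem hb,
          card_erase_of_mem (mem_univ a), card_univ, hα]
        rfl

end SubsetSums

noncomputable def pShCard (d k : ℕ) : ℝ :=
  if 0 < k ∧ k < d then
    (((d : ℝ) - 1) / ((Nat.choose d k : ℝ) * (k : ℝ) * ((d : ℝ) - (k : ℝ)))) / shapQ d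
  else 0

lemma pSh_eq_pShCard (d : ℕ) (s : Finset (Fin d)) : pSh d s = pShCard d #s := rfl

lemma pShCard_self (d : ℕ) : pShCard d d = 0 := if_neg fun h => h.2.false

lemma secondMoment_apply (d : ℕ) (i j : Fin d) :
    secondMoment d i j = ∑ s : Finset (Fin d) with i ∈ s ∧ j ∈ s, pShCard d #s := by
  simp only [secondMoment, pSh_eq_pShCard, sum_filter, mul_ite, mul_one, mul_zero, ← ite_and,
    and_comm]

lemma choose_mul_pShCard_succ {n k : ℕ} (hk : k ≤ n) :
    (n + 1).choose k * pShCard (n + 2) (k + 1)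
      = (n + 1) / ((n + 2) * ((n : ℝ) + 1 - k)) / shapQ (n + 2) := by
  have hchoose : ((n + 2 : ℕ) : ℝ) * (n + 1).choose k = (n + 2).choose (k + 1) * (k + 1 : ℕ) := by
    exact_mod_cast Nat.add_one_mul_choose_eq (n + 1) k
  have : (n : ℝ) + 1 - k ≠ 0 := sub_ne_zero.2 (by exact_mod_cast (Nat.lt_succ_of_le hk).ne')
  have : ((n + 2).choose (k + 1) : ℝ) ≠ 0 := by exact_mod_cast (Nat.choose_pos (by omega)).ne'
  rw [pShCard, if_pos (by omega), ← mul_div_assoc]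
  congr 1
  push_cast at hchoose ⊢
  rw [show (n : ℝ) + 2 - (k + 1) = n + 1 - k by ring]
  field_simp
  linear_combination ((n : ℝ) + 1) * hchoose

lemma choose_mul_pShCard_add_two {n k : ℕ} (hk : k < n) :
    n.choose k * pShCard (n + 2) (k + 2)
      = (k + 1) / ((n + 2) * ((n : ℝ) - k)) / shapQ (n + 2) := by
  have h1 : ((n + 1 : ℕ) : ℝ) * n.choose k = (n + 1).choose (k + 1) * (k + 1 : ℕ) := by
    exact_mod_cast Nat.add_one_mul_choose_eq n k
  have h2 : ((n + 2 : ℕ) : ℝ) * (n + 1).choose (k + 1) = (n + 2).choose (k + 2) * (k + 2 : ℕ) := by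
    exact_mod_cast Nat.add_one_mul_choose_eq (n + 1) (k + 1)
  have : (n : ℝ) - k ≠ 0 := sub_ne_zero.2 (by exact_mod_cast hk.ne')
  have : ((n + 2).choose (k + 2) : ℝ) ≠ 0 := by exact_mod_cast (Nat.choose_pos (by omega)).ne'
  rw [pShCard, if_pos (by omega), ← mul_div_assoc]
  congr 1
  push_cast at h1 h2 ⊢
  rw [show (n : ℝ) + 2 - (k + 2) = n - k by ring]
  field_simp
  linear_combination (k + 1) * h2 + (n + 2) * h1

lemma secondMoment_apply_self (n : ℕ) (i : Fin (n + 2)) : secondMoment (n + 2) i i = 1 / 2 := by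
  have hH : harm (n + 1) ≠ 0 := (harm_pos n.succ_ne_zero).ne'
  calc secondMoment (n + 2) i i
      = ∑ k ∈ range (n + 2), (n + 1).choose k • pShCard (n + 2) (k + 1) := by
        rw [secondMoment_apply]
        simpa only [and_self] using sum_filter_mem_apply_card (Fintype.card_fin _) i _
    _ = ∑ k ∈ range (n + 1), (n + 1) / ((n + 2) * ((n : ℝ) + 1 - k)) / shapQ (n + 2) := by
        rw [sum_range_succ, pShCard_self, smul_zero, add_zero]
        refine sum_congr rfl fun k hk => ?_
        rw [nsmul_eq_mul, choose_mul_pShCard_succ (Nat.lt_succ_iff.1 (mem_range.1 hk))]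
    _ = (n + 1) / (n + 2) * harm (n + 1) / shapQ (n + 2) := by
        rw [← sum_div, ← sum_range_one_div_sub, mul_sum]
        push_cast
        refine congrArg (· / _) (sum_congr rfl fun k _ => ?_)
        field_simp
    _ = 1 / 2 := by
        rw [shapQ_eq]
        field_simp

lemma secondMoment_apply_of_ne (n : ℕ) {i j : Fin (n + 2)} (hij : i ≠ j) :
    secondMoment (n + 2) i j = (harm (n + 1) - 1) / (2 * harm (n + 1)) := by
  have hH : harm (n + 1) ≠ 0 := (harm_pos n.succ_ne_zero).ne'
  calc secondMoment (n + 2) i j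
      = ∑ k ∈ range (n + 1), n.choose k • pShCard (n + 2) (k + 2) := by
        rw [secondMoment_apply, sum_filter_mem_and_mem_apply_card (Fintype.card_fin _) hij]
    _ = ∑ k ∈ range n, (k + 1) / ((n + 2) * ((n : ℝ) - k)) / shapQ (n + 2) := by
        rw [sum_range_succ, pShCard_self, smul_zero, add_zero]
        refine sum_congr rfl fun k hk => ?_
        rw [nsmul_eq_mul, choose_mul_pShCard_add_two (mem_range.1 hk)]
    _ = ((n + 1) * harm n - n) / (n + 2) / shapQ (n + 2) := by
        have hsplit : ∀ k ∈ range n, ((k : ℝ) + 1) / ((n + 2) * (n - k))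
            = ((n + 1) * (1 / ((n : ℝ) - k)) - 1) / (n + 2) := by
          intro k hk
          have : (n : ℝ) - k ≠ 0 := sub_ne_zero.2 (by exact_mod_cast (mem_range.1 hk).ne')
          field_simp
          ring
        rw [← sum_div, sum_congr rfl hsplit, ← sum_div, sum_sub_distrib, ← mul_sum,
          sum_range_one_div_sub, sum_const, card_range, nsmul_one]
    _ = (harm (n + 1) - 1) / (2 * harm (n + 1)) := by
        rw [shapQ_eq, harm_succ]
        field_simp
        ring

lemma sum_sum_mul_apply_mul_of_eq_const_add_diag {ι R : Type*} [Fintype ι] [DecidableEq ι]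
    [CommRing R] {M : Matrix ι ι R} {b c : R} (hM : ∀ i j, M i j = b + if i = j then c else 0)
    (φ : ι → R) :
    ∑ i, ∑ j, φ i * M i j * φ j = c * ∑ i, φ i ^ 2 + b * (∑ i, φ i) ^ 2 := by
  simp only [hM, mul_add, add_mul, sum_add_distrib, mul_ite, ite_mul, mul_zero, zero_mul,
    sum_ite_eq, mem_univ, if_true, sq, sum_mul, mul_sum]
  rw [add_comm]
  congr 1 <;> refine sum_congr rfl fun i _ => ?_ <;> ring_nf

/-- The minimum eigenvalue of the second-moment matrix `A = E[s sᵀ]` of the Shapley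
kernel equals `1/(2 H_{d-1})`: the quadratic form satisfies
`φᵀAφ ≥ ‖φ‖²/(2 H_{d-1})` for all `φ`, with equality attained at some nonzero `φ`. -/
theorem shapley_second_moment_min_eigenvalue (d : ℕ) (hd : 2 ≤ d) :
    (∀ φ : EuclideanSpace ℝ (Fin d),
      ‖φ‖ ^ 2 / (2 * harm (d - 1)) ≤ ∑ i, ∑ j, φ i * secondMoment d i j * φ j) ∧
    ∃ φ : EuclideanSpace ℝ (Fin d), φ ≠ 0 ∧
      ∑ i, ∑ j, φ i * secondMoment d i j * φ j = ‖φ‖ ^ 2 / (2 * harm (d - 1)) := by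
  obtain ⟨n, rfl⟩ := Nat.exists_eq_add_of_le' hd
  rw [show n + 2 - 1 = n + 1 by omega]
  set H := harm (n + 1)
  have hH : 1 ≤ H := one_le_harm n.succ_ne_zero
  have hentries : ∀ i j,
      secondMoment (n + 2) i j = (H - 1) / (2 * H) + if i = j then 1 / (2 * H) else 0 := by
    intro i j
    split_ifs with hij
    · rw [hij, secondMoment_apply_self]
      field_simp
      ring
    · rw [secondMoment_apply_of_ne n hij, add_zero]
  have hform : ∀ φ : EuclideanSpace ℝ (Fin (n + 2)),
      ∑ i, ∑ j, φ i * secondMoment (n + 2) i j * φ j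
        = ‖φ‖ ^ 2 / (2 * H) + (H - 1) / (2 * H) * (∑ i, φ i) ^ 2 := fun φ => by
    rw [sum_sum_mul_apply_mul_of_eq_const_add_diag hentries, EuclideanSpace.real_norm_sq_eq]
    ring
  refine ⟨fun φ => ?_, EuclideanSpace.single 0 1 - EuclideanSpace.single 1 1, ?_, ?_⟩
  · have hb : 0 ≤ (H - 1) / (2 * H) := div_nonneg (sub_nonneg.2 hH) (by positivity)
    rw [hform]
    exact le_add_of_nonneg_right (mul_nonneg hb (sq_nonneg _))
  · intro h
    simpa using congrArg (fun φ : EuclideanSpace ℝ (Fin (n + 2)) => φ 0) h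
  · rw [hform]
    simp
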